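/- arXiv:1208.2202 — 3 statements merged into one kernel-verified Lean document; each statement's English description precedes it below -/
import Mathlib

section
/- For each z ∈ Γ₊ let v_z ∈ A_Γ be the image of the sum of the edges of the distinguished path π_z from z to *, and set v_* = 0. Then for every covering edge e : x → y of Γ, the image of e in A_Γ equals v_x − v_y. -/
/-- A finite ranked poset: a partial order with a unique minimal element `star`
and a rank function `rk` such that `rk star = 0`, covering relations increase the
rank by exactly one, and `rk` is strictly monotone (for a finite poset this is
equivalent to: all maximal chains in `[star, x]` have the same length `rk x`). -/
structure RankedPoset (Γ : Type) [PartialOrder Γ] where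
  star : Γ
  rk : Γ → ℕ
  bot_le : ∀ x, star ≤ x
  rk_star : rk star = 0
  rk_covBy : ∀ ⦃x y : Γ⦄, x ⋖ y → rk y = rk x + 1
  rk_strictMono : StrictMono rk

/-- A covering edge `x → y` of the poset `Γ`, recorded as the pair `(x, y)` with `y ⋖ x`. -/
abbrev RankedPoset.Edge (Γ : Type) [PartialOrder Γ] : Type := {p : Γ × Γ // p.2 ⋖ p.1}

variable {Γ : Type} [PartialOrder Γ] [DecidableEq Γ]

/-- The polynomial `(s - e₁)(s - e₂)⋯(s - eₙ)` attached to a list of edges, with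
coefficients in the free algebra `T(W)` on the set of edges. -/
noncomputable def pathPoly (F : Type) [Field F] (l : List (RankedPoset.Edge Γ)) :
    Polynomial (FreeAlgebra F (RankedPoset.Edge Γ)) :=
  (l.map fun e => Polynomial.X - Polynomial.C (FreeAlgebra.ι F e)).prod

/-- `eCoeff F l j` is `e(π, j)`: the coefficient of `s^(n-j)` in `(s-e₁)⋯(s-eₙ)`. -/
noncomputable def eCoeff (F : Type) [Field F] (l : List (RankedPoset.Edge Γ)) (j : ℕ) :
    FreeAlgebra F (RankedPoset.Edge Γ) :=
  (pathPoly F l).coeff (l.length - j)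

/-- `IsPath b a l` : the list of covering edges `l` forms a path from `b` down to `a`. -/
def IsPath (b a : Γ) (l : List (RankedPoset.Edge Γ)) : Prop :=
  l ≠ [] ∧ List.Chain' (fun e f => e.1.2 = f.1.1) l ∧
    (∀ e ∈ l.head?, e.1.1 = b) ∧ (∀ e ∈ l.getLast?, e.1.2 = a)

/-- The defining relations of the splitting algebra: `e(π,j) = e(π',j)` for any two
paths `π, π'` from `b` to `a` and any `0 ≤ j ≤ d(b,a)`. -/
inductive SplitRel (R : RankedPoset Γ) (F : Type) [Field F] :
    FreeAlgebra F (RankedPoset.Edge Γ) → FreeAlgebra F (RankedPoset.Edge Γ) → Prop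
  | mk (a b : Γ) (hab : a < b) (l l' : List (RankedPoset.Edge Γ)) (j : ℕ)
      (hl : IsPath b a l) (hl' : IsPath b a l') (hj : j ≤ R.rk b - R.rk a) :
      SplitRel R F (eCoeff F l j) (eCoeff F l' j)

/-- The splitting algebra `A_Γ = T(W)/I`. -/
abbrev SplittingAlgebra (R : RankedPoset Γ) (F : Type) [Field F] : Type :=
  RingQuot (SplitRel R F)

/-- The quotient map `T(W) → A_Γ`. -/
noncomputable abbrev splitMk (R : RankedPoset Γ) (F : Type) [Field F] :
    FreeAlgebra F (RankedPoset.Edge Γ) →ₐ[F] SplittingAlgebra R F :=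
  RingQuot.mkAlgHom F (SplitRel R F)


variable {Γ : Type} [PartialOrder Γ] [DecidableEq Γ]

/-- `vElt R F de hde z` is `v_z ∈ A_Γ`: the image of the sum of the edges of the
distinguished path `π_z` from `z` to `*` (and `v_* = 0`). -/
noncomputable def vElt (R : RankedPoset Γ) (F : Type) [Field F]
    (de : Γ → Γ) (hde : ∀ x, x ≠ R.star → de x ⋖ x) (z : Γ) : SplittingAlgebra R F :=
  if h : z = R.star then 0
  else splitMk R F (FreeAlgebra.ι F (⟨(z, de z), hde z h⟩ : RankedPoset.Edge Γ)) +
    vElt R F de hde (de z)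
termination_by R.rk z
decreasing_by exact R.rk_strictMono (hde z h).lt

/-!
Since `(s - e₁)⋯(s - eₙ) = sⁿ - (e₁ + ⋯ + eₙ) sⁿ⁻¹ + ⋯`, the relation `e(π, 1) = e(π', 1)` says that
any two paths with the same endpoints have the same edge sum in `A_Γ`. For an edge `e : x → y`,
both `e` followed by `π_y` and `π_x` are paths from `x` to `*`, so `e + v_y = v_x`.
-/

namespace Polynomial

variable {S ι : Type*} [Ring S] (f : ι → S)

theorem monic_list_prod_X_sub_C (l : List ι) : (l.map fun i => X - C (f i)).prod.Monic := by
  induction l with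
  | nil => exact monic_one
  | cons i l ih => exact (monic_X_sub_C (f i)).mul ih

theorem natDegree_list_prod_X_sub_C [Nontrivial S] (l : List ι) :
    (l.map fun i => X - C (f i)).prod.natDegree = l.length := by
  induction l with
  | nil => simp
  | cons i l ih =>
    rw [List.map_cons, List.prod_cons,
      (monic_X_sub_C (f i)).natDegree_mul (monic_list_prod_X_sub_C f l), natDegree_X_sub_C, ih,
      List.length_cons, add_comm]

theorem nextCoeff_list_prod_X_sub_C (l : List ι) :
    (l.map fun i => X - C (f i)).prod.nextCoeff = -(l.map f).sum := by
  induction l with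
  | nil => simp [nextCoeff]
  | cons i l ih =>
    rw [List.map_cons, List.prod_cons,
      (monic_X_sub_C (f i)).nextCoeff_mul (monic_list_prod_X_sub_C f l), nextCoeff_X_sub_C, ih,
      List.map_cons, List.sum_cons, neg_add]

end Polynomial

section Paths

variable {Γ : Type} [PartialOrder Γ]

theorem eCoeff_one (F : Type) [Field F] {l : List (RankedPoset.Edge Γ)} (hl : l ≠ []) :
    eCoeff F l 1 = -(l.map (FreeAlgebra.ι F)).sum := by
  have hdeg := Polynomial.natDegree_list_prod_X_sub_C (FreeAlgebra.ι F) l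
  rw [eCoeff, pathPoly, ← hdeg,
    ← Polynomial.nextCoeff_of_natDegree_pos (hdeg ▸ List.length_pos_iff.mpr hl),
    Polynomial.nextCoeff_list_prod_X_sub_C]

theorem IsPath.cons {a b : Γ} {l : List (RankedPoset.Edge Γ)} (hl : IsPath b a l)
    (e : RankedPoset.Edge Γ) (he : e.1.2 = b) : IsPath e.1.1 a (e :: l) := by
  obtain ⟨hne, hchain, hhead, hlast⟩ := hl
  refine ⟨List.cons_ne_nil _ _, ?_, by simp, ?_⟩
  · rw [List.Chain', List.isChain_cons]
    exact ⟨fun f hf => he.trans (hhead f hf).symm, hchain⟩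
  · obtain ⟨f, t, rfl⟩ := List.exists_cons_of_ne_nil hne
    rwa [List.getLast?_cons_cons]

theorem isPath_singleton (e : RankedPoset.Edge Γ) : IsPath e.1.1 e.1.2 [e] :=
  ⟨List.cons_ne_nil _ _, List.isChain_singleton e, by simp, by simp⟩

theorem splitMk_sum_eq_of_isPath (R : RankedPoset Γ) (F : Type) [Field F] {a b : Γ} (hab : a < b)
    {l l' : List (RankedPoset.Edge Γ)} (hl : IsPath b a l) (hl' : IsPath b a l') :
    splitMk R F (l.map (FreeAlgebra.ι F)).sum = splitMk R F (l'.map (FreeAlgebra.ι F)).sum := by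
  have hj : 1 ≤ R.rk b - R.rk a := Nat.le_sub_of_add_le' (R.rk_strictMono hab)
  have hrel := RingQuot.mkAlgHom_rel F (SplitRel.mk (R := R) (F := F) a b hab l l' 1 hl hl' hj)
  rwa [eCoeff_one F hl.1, eCoeff_one F hl'.1, map_neg, map_neg, neg_inj] at hrel

end Paths

section DistinguishedPath

variable (R : RankedPoset Γ) (de : Γ → Γ) (hde : ∀ x, x ≠ R.star → de x ⋖ x)

noncomputable def distinguishedPath (z : Γ) : List (RankedPoset.Edge Γ) :=
  if h : z = R.star then []
  else ⟨(z, de z), hde z h⟩ :: distinguishedPath (de z)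
termination_by R.rk z
decreasing_by exact R.rk_strictMono (hde z h).lt

theorem vElt_eq_splitMk_sum (F : Type) [Field F] (z : Γ) :
    vElt R F de hde z = splitMk R F ((distinguishedPath R de hde z).map (FreeAlgebra.ι F)).sum := by
  rw [vElt, distinguishedPath]
  split_ifs with h
  · simp
  · rw [List.map_cons, List.sum_cons, map_add, vElt_eq_splitMk_sum F (de z)]
termination_by R.rk z
decreasing_by exact R.rk_strictMono (hde z h).lt

theorem isPath_cons_distinguishedPath (e : RankedPoset.Edge Γ) :
    IsPath e.1.1 R.star (e :: distinguishedPath R de hde e.1.2) := by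
  rw [distinguishedPath]
  split_ifs with h
  · exact h ▸ isPath_singleton e
  · exact (isPath_cons_distinguishedPath ⟨(e.1.2, de e.1.2), hde e.1.2 h⟩).cons e rfl
termination_by R.rk e.1.2
decreasing_by exact R.rk_strictMono (hde e.1.2 h).lt

theorem isPath_distinguishedPath {z : Γ} (hz : z ≠ R.star) :
    IsPath z R.star (distinguishedPath R de hde z) := by
  rw [distinguishedPath, dif_neg hz]
  exact isPath_cons_distinguishedPath R de hde ⟨(z, de z), hde z hz⟩

end DistinguishedPath

theorem splitMk_edge_eq_vElt_sub_vElt_general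
    {Γ : Type} [PartialOrder Γ] [DecidableEq Γ]
    (R : RankedPoset Γ) (F : Type) [Field F]
    (de : Γ → Γ) (hde : ∀ x, x ≠ R.star → de x ⋖ x)
    (e : RankedPoset.Edge Γ) :
    splitMk R F (FreeAlgebra.ι F e) =
      vElt R F de hde e.1.1 - vElt R F de hde e.1.2 := by
  have hstar : R.star < e.1.1 := (R.bot_le e.1.2).trans_lt e.2.lt
  have hsum := splitMk_sum_eq_of_isPath R F hstar (isPath_cons_distinguishedPath R de hde e)
    (isPath_distinguishedPath R de hde hstar.ne')
  rw [vElt_eq_splitMk_sum, vElt_eq_splitMk_sum, ← hsum, List.map_cons, List.sum_cons, map_add,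
    add_sub_cancel_right]

/-- For every covering edge `e : x → y` of `Γ`, the image of `e` in `A_Γ` equals
`v_x - v_y`. -/
theorem splitMk_edge_eq_vElt_sub_vElt
    {Γ : Type} [PartialOrder Γ] [DecidableEq Γ] [Fintype Γ]
    (R : RankedPoset Γ) (F : Type) [Field F]
    (de : Γ → Γ) (hde : ∀ x, x ≠ R.star → de x ⋖ x)
    (e : RankedPoset.Edge Γ) :
    splitMk R F (FreeAlgebra.ι F e) =
      vElt R F de hde e.1.1 - vElt R F de hde e.1.2 :=
  splitMk_edge_eq_vElt_sub_vElt_general R F de hde e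
end

section
/- Let A be a good-monomial algebra for Γ over F. Define f(b,a) = e(b, d(b,a)) ∈ A for a < b in Γ, let d : A ⊗_F Ĉ_n → A ⊗_F Ĉ_{n−1} (n ≥ 0) be given by d(m ⊗ [(b_n > ⋯ > b₀); b,q]) = m·f(b,b_n) ⊗ [(b_{n−1} > ⋯ > b₀); b_n, q − d(b,b_n)] − m ⊗ δ̂[(b_n > ⋯ > b₀); b,q], let d : A ⊗_F Ĉ_{−1} → A be given by d(m ⊗ [( ); b,q]) = m·e(b,q), and let ε : A → F be the augmentation. Then the sequence ⋯ → A ⊗_F Ĉ₁ → A ⊗_F Ĉ₀ → A ⊗_F Ĉ_{−1} → A → F → 0 is exact; in particular A ⊗_F Ĉ_• → A is a free resolution of the left A-module F = A/A₊. -/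
variable {Γ : Type} [PartialOrder Γ]

/-- A basis element `[(b_n > ⋯ > b₀); b, q]` of the `(b,q)`-summand of `Ĉ_{n-1}`:
here `b ∈ Γ₊`, `1 ≤ q ≤ rk b`, and `b > b_n > ⋯ > b₀` is a strictly decreasing chain
(recorded as the list `l = [b_n, …, b₀]` of length `n`) contained in
`Γ_{b,q} = {a : * < a < b, rk b - rk a ≤ q - 1}`. -/
structure ChainIdx (R : RankedPoset Γ) (n : ℕ) where
  b : Γ
  q : ℕ
  l : List Γ
  hq1 : 1 ≤ q
  hq2 : q ≤ R.rk b
  hlen : l.length = n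
  hpair : List.Pairwise (· > ·) (b :: l)
  hmem : ∀ a ∈ l, R.star < a ∧ R.rk b - R.rk a ≤ q - 1

namespace ChainIdx

variable {R : RankedPoset Γ} {n : ℕ}

theorem l_ne_nil (β : ChainIdx R (n + 1)) : β.l ≠ [] :=
  List.ne_nil_of_length_pos (by rw [β.hlen]; omega)

theorem head_lt (β : ChainIdx R (n + 1)) : β.l.head β.l_ne_nil < β.b :=
  (List.pairwise_cons.mp β.hpair).1 _ (List.head_mem β.l_ne_nil)

/-- `[(b_{n-1} > ⋯ > b₀); b_n, q - d(b,b_n)]`, the index appearing in the leading term of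
the differential. -/
def top (β : ChainIdx R (n + 1)) : ChainIdx R n where
  b := β.l.head β.l_ne_nil
  q := β.q - (R.rk β.b - R.rk (β.l.head β.l_ne_nil))
  l := β.l.tail
  hq1 := by
    have h1 := (β.hmem _ (List.head_mem β.l_ne_nil)).2
    have h2 := β.hq1
    omega
  hq2 := by
    have h1 := R.rk_strictMono β.head_lt
    have h2 := β.hq2
    omega
  hlen := by
    have := β.hlen
    cases h : β.l with
    | nil => exact absurd h β.l_ne_nil
    | cons a t => simp [h] at this ⊢; omega
  hpair := by
    have h := β.hpair.of_cons
    rwa [← List.cons_head_tail β.l_ne_nil] at h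
  hmem := by
    intro a ha
    have hal : a ∈ β.l := List.mem_of_mem_tail ha
    have h1 := (β.hmem a hal).1
    have h2 := (β.hmem a hal).2
    have hpl : List.Pairwise (· > ·) (β.l.head β.l_ne_nil :: β.l.tail) := by
      have h := β.hpair.of_cons
      rwa [← List.cons_head_tail β.l_ne_nil] at h
    have h3 : a < β.l.head β.l_ne_nil := (List.pairwise_cons.mp hpl).1 a ha
    have h4 := R.rk_strictMono h3
    have h5 := R.rk_strictMono β.head_lt
    have h6 := β.hq1
    have h7 := β.hq2
    exact ⟨h1, by omega⟩

/-- The index obtained by deleting the `i`-th entry of the chain (i.e. `b_{n-i}`). -/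
def del (β : ChainIdx R (n + 1)) (i : Fin (n + 1)) : ChainIdx R n where
  b := β.b
  q := β.q
  l := β.l.eraseIdx i
  hq1 := β.hq1
  hq2 := β.hq2
  hlen := by
    have h1 := List.length_eraseIdx_add_one (l := β.l) (i := i) (by rw [β.hlen]; exact i.isLt)
    have h2 := β.hlen
    omega
  hpair := List.Pairwise.sublist ((β.l.eraseIdx_sublist i).cons₂ β.b) β.hpair
  hmem := fun a ha => β.hmem a ((β.l.eraseIdx_sublist i).subset ha)

end ChainIdx

section Differential

variable (R : RankedPoset Γ) (A : Type) [Ring A]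

/-- The value of the differential on the basis element `1 ⊗ [(b_n > ⋯ > b₀); b,q]`:
`f(b,b_n) ⊗ [(b_{n-1} > ⋯ > b₀); b_n, q - d(b,b_n)] - 1 ⊗ δ̂[(b_n > ⋯ > b₀); b,q]`. -/
noncomputable def dBasis (f : Γ → Γ → A) {n : ℕ} (β : ChainIdx R (n + 1)) :
    ChainIdx R n →₀ A :=
  Finsupp.single β.top (f β.b (β.l.head β.l_ne_nil)) -
    ∑ i : Fin (n + 1), Finsupp.single (β.del i) ((-1 : A) ^ (i : ℕ))

/-- The differential `d : A ⊗ Ĉ_n → A ⊗ Ĉ_{n-1}` (the free `A`-module `A ⊗ Ĉ_n` being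
realized as the finitely supported functions `ChainIdx R (n+1) →₀ A`), extended from
`d(m ⊗ [(b_n > ⋯ > b₀); b,q]) = m·f(b,b_n) ⊗ [(b_{n-1} > ⋯ > b₀); b_n, q - d(b,b_n)]
  - m ⊗ δ̂[(b_n > ⋯ > b₀); b,q]`. -/
noncomputable def dMap (f : Γ → Γ → A) (n : ℕ) :
    (ChainIdx R (n + 1) →₀ A) → (ChainIdx R n →₀ A) :=
  fun x => x.sum fun β m => (dBasis R A f β).mapRange (fun a => m * a) (mul_zero m)

end Differential

section GoodMonomial

variable (R : RankedPoset Γ)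

/-- A list `[(x₁,k₁),…,(x_r,k_r)]` indexes a good monomial `e(x₁,k₁)⋯e(x_r,k_r)` if each
`xᵢ ∈ Γ₊`, `1 ≤ kᵢ ≤ rk xᵢ`, and no `(xᵢ,kᵢ) ⊵ (xᵢ₊₁,kᵢ₊₁)`, i.e. it never happens that
`xᵢ > xᵢ₊₁` with `kᵢ = rk xᵢ - rk xᵢ₊₁`. -/
def IsGoodList (l : List (Γ × ℕ)) : Prop :=
  (∀ p ∈ l, p.1 ≠ R.star ∧ 1 ≤ p.2 ∧ p.2 ≤ R.rk p.1) ∧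
    List.Chain' (fun p q => ¬(q.1 < p.1 ∧ p.2 = R.rk p.1 - R.rk q.1)) l

variable (A : Type) [Ring A] (e : Γ → ℕ → A)

/-- The good monomial `e(x₁,k₁)⋯e(x_r,k_r)` indexed by a good list. -/
def goodMonomial (l : {l : List (Γ × ℕ) // IsGoodList R l}) : A :=
  (l.1.map fun p => e p.1 p.2).prod

end GoodMonomial

/-- The differential `d : A ⊗ Ĉ_{-1} → A`, `m ⊗ [( ); b,q] ↦ m·e(b,q)`. -/
noncomputable def dNeg (R : RankedPoset Γ) (A : Type) [Ring A] (e : Γ → ℕ → A) :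
    (ChainIdx R 0 →₀ A) → A :=
  fun x => x.sum fun β m => m * e β.b β.q

/-!
`A ⊗ Ĉ_•` is contractible as a complex of `F`-vector spaces. Its `F`-basis consists of the
`m_L ⊗ [(b_n > ⋯ > b₀); b, q]` with `m_L` a good monomial; the homotopy `S` sends such an element
to `m_{L'} ⊗ [(b > b_n > ⋯ > b₀); x, q + d(x,b)]` when `L = L' (x, d(x,b))` with `x > b`, and
to `0` otherwise. Right multiplication of a good monomial by `e(b,j)` either merges into its last
letter by relation (ii) or appends the letter `(b,j)`; in both cases the product is again a good
monomial, and comparing the two cases gives `S d + d S = 1` in every degree (with `ε` and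
`S : A → A ⊗ Ĉ₋₁` at the end). Relation (ii) also gives `d² = 0`, the remaining terms cancelling
by the simplicial identities for deleting vertices of a chain.
-/

theorem Function.Exact.of_homotopy {M N P : Type*} [AddZeroClass N] [Zero P]
    {f : M → N} {g : N → P} (s : N → M) (t : P → N) (ht : t 0 = 0)
    (hgf : ∀ x, g (f x) = 0) (hid : ∀ y, t (g y) + f (s y) = y) : Function.Exact f g :=
  Function.Exact.of_comp_of_mem_range (funext hgf) fun y hy =>
    ⟨s y, by simpa [hy, ht] using hid y⟩

theorem List.eraseIdx_eraseIdx_of_le {α : Type*} (l : List α) {i j : ℕ} (h : i ≤ j) :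
    (l.eraseIdx i).eraseIdx j = (l.eraseIdx (j + 1)).eraseIdx i := by
  induction l generalizing i j with
  | nil => simp
  | cons a t ih =>
    cases i with
    | zero => simp
    | succ i =>
      cases j with
      | zero => omega
      | succ j => simp only [List.eraseIdx_cons_succ, ih (Nat.le_of_succ_le_succ h)]

theorem neg_one_pow_smul_add_neg_one_pow_succ_smul {M : Type*} [AddCommGroup M] (a : ℕ) (x : M) :
    (-1 : ℤ) ^ a • x + (-1 : ℤ) ^ (a + 1) • x = 0 := by
  rw [pow_succ, mul_neg_one, neg_smul, add_neg_cancel]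

theorem Fin.sum_sum_neg_one_pow_smul_eq_zero {M : Type*} [AddCommGroup M] {n : ℕ}
    (φ : Fin (n + 2) → Fin (n + 1) → M)
    (hφ : ∀ i j : Fin (n + 1), i ≤ j → φ i.castSucc j = φ j.succ i) :
    ∑ i : Fin (n + 2), ∑ j : Fin (n + 1), (-1 : ℤ) ^ (i : ℕ) • (-1 : ℤ) ^ (j : ℕ) • φ i j = 0 := by
  simp only [smul_smul, ← pow_add]
  rw [← Finset.sum_product']
  let σ : Fin (n + 2) × Fin (n + 1) → Fin (n + 2) × Fin (n + 1) := fun p =>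
    if h : (p.1 : ℕ) ≤ p.2 then (p.2.succ, p.1.castLT (by omega))
    else (p.2.castSucc, p.1.pred (by rintro h'; simp [h'] at h))
  refine Finset.sum_involution (fun p _ => σ p) (fun ⟨i, j⟩ _ => ?_) (fun ⟨i, j⟩ _ _ => ?_)
    (fun _ _ => Finset.mem_univ _) (fun ⟨i, j⟩ _ => ?_)
  · by_cases h : (i : ℕ) ≤ j
    · have := hφ (i.castLT (by omega)) j (by simpa [Fin.le_def] using h)
      simp only [σ, dif_pos h, Fin.castSucc_castLT] at this ⊢
      rw [this, Fin.val_succ, Fin.val_castLT, show (j : ℕ) + 1 + i = i + j + 1 by omega]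
      exact neg_one_pow_smul_add_neg_one_pow_succ_smul _ _
    · have hi : i ≠ 0 := by rintro rfl; simp at h
      have := hφ j (i.pred hi) (by rw [Fin.le_def, Fin.val_pred]; omega)
      simp only [σ, dif_neg h, Fin.succ_pred] at this ⊢
      rw [this, Fin.val_castSucc, Fin.val_pred, show (i : ℕ) + j = j + (i - 1) + 1 by omega,
        add_comm]
      exact neg_one_pow_smul_add_neg_one_pow_succ_smul _ _
  · simp only [σ]
    split_ifs <;> simp [Prod.ext_iff, Fin.ext_iff] <;> omega
  · by_cases h : (i : ℕ) ≤ j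
    · have h' : ¬ ((j.succ : Fin (n + 2)) : ℕ) ≤ (i.castLT (by omega) : Fin (n + 1)) := by
        simp only [Fin.val_succ, Fin.val_castLT]; omega
      simp only [σ, dif_pos h, dif_neg h']
      simp
    · have hi : i ≠ 0 := by rintro rfl; simp at h
      have h' : ((j.castSucc : Fin (n + 2)) : ℕ) ≤ (i.pred hi : Fin (n + 1)) := by
        simp only [Fin.val_castSucc, Fin.val_pred]; omega
      simp only [σ, dif_neg h, dif_pos h']
      simp

theorem Finsupp.single_mul_neg_one_pow {α A : Type*} [Ring A] (a : α) (m : A) (i : ℕ) :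
    single a (m * (-1) ^ i) = (-1 : ℤ) ^ i • single a m := by
  rw [smul_single, zsmul_eq_mul', Int.cast_pow, Int.cast_neg, Int.cast_one]

namespace RankedPoset

variable (R : RankedPoset Γ)

theorem star_lt_of_one_le_rk {b : Γ} (h : 1 ≤ R.rk b) : R.star < b :=
  (R.bot_le b).lt_of_ne fun hb => by rw [← hb, R.rk_star] at h; omega

end RankedPoset

attribute [ext] ChainIdx

namespace ChainIdx

variable {R : RankedPoset Γ} {n : ℕ}

theorem star_lt (β : ChainIdx R n) : R.star < β.b :=
  R.star_lt_of_one_le_rk (β.hq1.trans β.hq2)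

theorem lt_of_mem (β : ChainIdx R n) {a : Γ} (ha : a ∈ β.l) : a < β.b :=
  (List.pairwise_cons.mp β.hpair).1 a ha

theorem star_lt_of_mem (β : ChainIdx R n) {a : Γ} (ha : a ∈ β.l) : R.star < a :=
  (β.hmem a ha).1

theorem rk_sub_rk_head_lt (β : ChainIdx R (n + 1)) :
    R.rk β.b - R.rk (β.l.head β.l_ne_nil) < β.q := by
  have := (β.hmem _ (List.head_mem β.l_ne_nil)).2
  have := β.hq1
  omega

theorem rk_head_lt (β : ChainIdx R (n + 1)) : R.rk (β.l.head β.l_ne_nil) < R.rk β.b :=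
  R.rk_strictMono β.head_lt

@[simp] theorem top_b (β : ChainIdx R (n + 1)) : β.top.b = β.l.head β.l_ne_nil := rfl

@[simp] theorem top_q (β : ChainIdx R (n + 1)) :
    β.top.q = β.q - (R.rk β.b - R.rk (β.l.head β.l_ne_nil)) := rfl

@[simp] theorem top_l (β : ChainIdx R (n + 1)) : β.top.l = β.l.tail := rfl

@[simp] theorem del_b (β : ChainIdx R (n + 1)) (i : Fin (n + 1)) : (β.del i).b = β.b := rfl

@[simp] theorem del_q (β : ChainIdx R (n + 1)) (i : Fin (n + 1)) : (β.del i).q = β.q := rfl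

@[simp] theorem del_l (β : ChainIdx R (n + 1)) (i : Fin (n + 1)) :
    (β.del i).l = β.l.eraseIdx i := rfl

/-- `[( ); x, k]`, a basis element of `Ĉ_{-1}`. -/
def nil (x : Γ) (k : ℕ) (h1 : 1 ≤ k) (h2 : k ≤ R.rk x) : ChainIdx R 0 :=
  ⟨x, k, [], h1, h2, rfl, List.pairwise_singleton _ _, by simp⟩

theorem eq_nil (β : ChainIdx R 0) : β = nil β.b β.q β.hq1 β.hq2 := by
  ext1
  · rfl
  · rfl
  · exact List.eq_nil_of_length_eq_zero β.hlen

/-- `[(b > b_n > ⋯ > b₀); x, q + d(x,b)]` for `β = [(b_n > ⋯ > b₀); b, q]` and `x > b`. -/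
@[simps]
def push (β : ChainIdx R n) (x : Γ) (hx : β.b < x) : ChainIdx R (n + 1) where
  b := x
  q := β.q + (R.rk x - R.rk β.b)
  l := β.b :: β.l
  hq1 := by have := β.hq1; omega
  hq2 := by have := R.rk_strictMono hx; have := β.hq2; omega
  hlen := by simp [β.hlen]
  hpair := List.pairwise_cons.mpr
    ⟨by simpa using ⟨hx, fun a ha => (β.lt_of_mem ha).trans hx⟩, β.hpair⟩
  hmem a ha := by
    have := R.rk_strictMono hx
    have := β.hq1
    rcases List.mem_cons.mp ha with rfl | ha
    · exact ⟨β.star_lt, by omega⟩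
    · have := R.rk_strictMono (β.lt_of_mem ha)
      have := (β.hmem a ha).2
      exact ⟨β.star_lt_of_mem ha, by omega⟩

theorem head_push (β : ChainIdx R n) (x : Γ) (hx : β.b < x) :
    (β.push x hx).l.head (β.push x hx).l_ne_nil = β.b :=
  rfl

theorem push_top (β : ChainIdx R n) (x : Γ) (hx : β.b < x) : (β.push x hx).top = β := by
  ext1 <;> simp

theorem top_push (β : ChainIdx R (n + 1)) : β.top.push β.b β.head_lt = β := by
  have := β.rk_sub_rk_head_lt
  ext1
  · rfl
  · simp [push]; omega
  · simp [push]

theorem top_push_eq_push_del_zero (β : ChainIdx R (n + 1)) {x : Γ} (hx : β.b < x) :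
    β.top.push x (β.head_lt.trans hx) = (β.push x hx).del 0 := by
  have := β.rk_sub_rk_head_lt
  have := β.rk_head_lt
  have := R.rk_strictMono hx
  ext1
  · rfl
  · simp [push]; omega
  · simp [push]

theorem del_push (β : ChainIdx R (n + 1)) {x : Γ} (hx : β.b < x) (i : Fin (n + 1)) :
    (β.del i).push x hx = (β.push x hx).del i.succ :=
  rfl

theorem nil_eq_push_del_zero (β : ChainIdx R 0) {x : Γ} (hx : β.b < x) {k : ℕ} (h1 : 1 ≤ k)
    (h2 : k ≤ R.rk x) (hk : k = R.rk x - R.rk β.b + β.q) : nil x k h1 h2 = (β.push x hx).del 0 := by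
  ext1
  · rfl
  · simp only [nil, del_q, push_q]
    omega
  · simp [nil, List.eq_nil_of_length_eq_zero β.hlen]

theorem head_del_succ (β : ChainIdx R (n + 2)) (i : Fin (n + 1)) :
    (β.del i.succ).l.head (β.del i.succ).l_ne_nil = β.l.head β.l_ne_nil := by
  obtain ⟨a, t, hl⟩ := List.exists_cons_of_ne_nil β.l_ne_nil
  simp only [del_l, hl, Fin.val_succ, List.eraseIdx_cons_succ, List.head_cons]

theorem top_del_succ (β : ChainIdx R (n + 2)) (i : Fin (n + 1)) :
    (β.del i.succ).top = β.top.del i := by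
  obtain ⟨a, t, hl⟩ := List.exists_cons_of_ne_nil β.l_ne_nil
  ext1 <;> simp [hl]

theorem top_top (β : ChainIdx R (n + 2)) : β.top.top = (β.del 0).top := by
  have h₁ := β.rk_sub_rk_head_lt
  have h₂ := β.top.rk_head_lt
  have h₃ := β.rk_head_lt
  obtain ⟨a, t, hl⟩ := List.exists_cons_of_ne_nil β.l_ne_nil
  ext1
  · simp [hl]
  · simp only [top_q, top_b, top_l, del_q, del_b, del_l, hl] at h₁ h₂ h₃ ⊢
    simp only [List.tail_cons, Fin.val_zero, List.eraseIdx_zero] at h₂ ⊢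
    omega
  · simp [hl]

theorem del_del (β : ChainIdx R (n + 2)) {i j : Fin (n + 1)} (h : i ≤ j) :
    (β.del i.castSucc).del j = (β.del j.succ).del i := by
  ext1
  · rfl
  · rfl
  · exact List.eraseIdx_eraseIdx_of_le β.l h

end ChainIdx

namespace GoodResolution

open Finsupp

section Monomial

variable {ι M : Type*} [Monoid M] (e : ι → ℕ → M)

def monomial (L : List (ι × ℕ)) : M :=
  (L.map fun p => e p.1 p.2).prod

@[simp] theorem monomial_nil : monomial e [] = 1 := rfl

@[simp] theorem monomial_concat (L : List (ι × ℕ)) (x : ι) (k : ℕ) :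
    monomial e (L ++ [(x, k)]) = monomial e L * e x k := by
  simp [monomial]

end Monomial

variable {R : RankedPoset Γ} {A : Type} [Ring A] {e : Γ → ℕ → A} {n : ℕ}

/-- Relation (ii) of a good-monomial algebra. -/
def MulOfDominates (R : RankedPoset Γ) (e : Γ → ℕ → A) : Prop :=
  ∀ x y : Γ, ∀ j k : ℕ, y ≠ R.star → y < x → j = R.rk x - R.rk y →
    1 ≤ k → k ≤ R.rk y → e x j * e y k = e x (j + k)

/-- The last letter `(x, k)` of `L` satisfies `(x, k) ⊵ (b, ·)`. -/
def LastDominates (R : RankedPoset Γ) (b : Γ) (L : List (Γ × ℕ)) : Prop :=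
  ∃ L' x, b < x ∧ L = L' ++ [(x, R.rk x - R.rk b)]

theorem MulOfDominates.mul_top (hmul : MulOfDominates R e) (β : ChainIdx R (n + 1)) {k : ℕ}
    (h1 : 1 ≤ k) (h2 : k ≤ R.rk β.top.b) :
    e β.b (R.rk β.b - R.rk (β.l.head β.l_ne_nil)) * e β.top.b k =
      e β.b (R.rk β.b - R.rk (β.l.head β.l_ne_nil) + k) :=
  hmul _ _ _ _ β.top.star_lt.ne' β.head_lt rfl h1 h2

theorem monomial_mul_of_lastDominates (hmul : MulOfDominates R e) (L : List (Γ × ℕ))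
    {x b : Γ} {j : ℕ} (hb : R.star < b) (hx : b < x) (h1 : 1 ≤ j) (h2 : j ≤ R.rk b) :
    monomial e (L ++ [(x, R.rk x - R.rk b)]) * e b j =
      monomial e (L ++ [(x, R.rk x - R.rk b + j)]) := by
  rw [monomial_concat, monomial_concat, mul_assoc, hmul x b _ j hb.ne' hx rfl h1 h2]

theorem _root_.IsGoodList.concat {L : List (Γ × ℕ)} (hL : IsGoodList R L) {b : Γ} {j : ℕ}
    (hb : b ≠ R.star) (h1 : 1 ≤ j) (h2 : j ≤ R.rk b) (hdom : ¬ LastDominates R b L) :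
    IsGoodList R (L ++ [(b, j)]) := by
  refine ⟨fun p hp => ?_, List.isChain_append.mpr ⟨hL.2, List.isChain_singleton _, ?_⟩⟩
  · rcases List.mem_append.mp hp with hp | hp
    · exact hL.1 p hp
    · obtain rfl := List.mem_singleton.mp hp
      exact ⟨hb, h1, h2⟩
  · intro p hp q hq
    obtain rfl : (b, j) = q := by simpa using hq
    rintro ⟨hlt, hk⟩
    obtain ⟨L', p', rfl⟩ := (L.eq_nil_or_concat').resolve_left (by rintro rfl; simp at hp)
    obtain rfl : p' = p := by simpa using hp
    exact hdom ⟨L', p'.1, hlt, by rw [← hk]⟩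

theorem _root_.IsGoodList.replaceLast {L : List (Γ × ℕ)} {x : Γ} {k k' : ℕ}
    (hL : IsGoodList R (L ++ [(x, k)])) (h1 : 1 ≤ k') (h2 : k' ≤ R.rk x) :
    IsGoodList R (L ++ [(x, k')]) := by
  obtain ⟨hmem, hchain⟩ := hL
  replace hchain := List.isChain_append.mp hchain
  refine ⟨fun p hp => ?_, List.isChain_append.mpr ⟨hchain.1, List.isChain_singleton _, ?_⟩⟩
  · rcases List.mem_append.mp hp with hp | hp
    · exact hmem p (List.mem_append_left _ hp)
    · obtain rfl := List.mem_singleton.mp hp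
      exact ⟨(hmem (x, k) (by simp)).1, h1, h2⟩
  · intro p hp q hq
    obtain rfl : (x, k') = q := by simpa using hq
    exact hchain.2.2 p hp (x, k) (by simp)

theorem _root_.IsGoodList.bounds_of_concat {L : List (Γ × ℕ)} {x : Γ} {k : ℕ}
    (hL : IsGoodList R (L ++ [(x, k)])) : 1 ≤ k ∧ k ≤ R.rk x :=
  (hL.1 (x, k) (by simp)).2

variable (R e) in
noncomputable def diff (n : ℕ) : (ChainIdx R (n + 1) →₀ A) →ₗ[A] (ChainIdx R n →₀ A) :=
  linearCombination A (dBasis R A fun b a => e b (R.rk b - R.rk a))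

variable (R e) in
noncomputable def diffNeg : (ChainIdx R 0 →₀ A) →ₗ[A] A :=
  linearCombination A fun β => e β.b β.q

theorem dMap_eq_diff : dMap R A (fun b a => e b (R.rk b - R.rk a)) n = diff R e n := rfl

theorem dNeg_eq_diffNeg : dNeg R A e = diffNeg R e := rfl

theorem diff_single (β : ChainIdx R (n + 1)) (m : A) :
    diff R e n (single β m) =
      single β.top (m * e β.b (R.rk β.b - R.rk (β.l.head β.l_ne_nil))) -
        ∑ i : Fin (n + 1), (-1 : ℤ) ^ (i : ℕ) • single (β.del i) m := by
  simp only [diff, linearCombination_single, dBasis, smul_sub, Finset.smul_sum, smul_single',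
    single_mul_neg_one_pow]

theorem diffNeg_single (β : ChainIdx R 0) (m : A) : diffNeg R e (single β m) = m * e β.b β.q :=
  linearCombination_single A m β

theorem diff_diff_single (hmul : MulOfDominates R e) (β : ChainIdx R (n + 2)) (m : A) :
    diff R e n (diff R e (n + 1) (single β m)) = 0 := by
  have hfaces : ∑ i : Fin (n + 2), ∑ j : Fin (n + 1),
      (-1 : ℤ) ^ (i : ℕ) • (-1 : ℤ) ^ (j : ℕ) • single ((β.del i).del j) m = 0 :=
    Fin.sum_sum_neg_one_pow_smul_eq_zero _ fun i j h => by rw [β.del_del h]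
  have htop : single β.top.top (m * e β.b (R.rk β.b - R.rk (β.l.head β.l_ne_nil)) *
        e β.top.b (R.rk β.top.b - R.rk (β.top.l.head β.top.l_ne_nil))) =
      single (β.del 0).top
        (m * e β.b (R.rk β.b - R.rk ((β.del 0).l.head (β.del 0).l_ne_nil))) := by
    have hc := β.rk_head_lt
    have hc' := β.top.rk_head_lt
    have hhead : β.top.l.head β.top.l_ne_nil = (β.del 0).l.head (β.del 0).l_ne_nil :=
      congrArg ChainIdx.b β.top_top
    rw [β.top_top, mul_assoc, hmul.mul_top β (by omega) (Nat.sub_le _ _), ← hhead]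
    congr 3
    simp only [ChainIdx.top_b] at hc' ⊢
    omega
  rw [diff_single, map_sub, map_sum, diff_single]
  simp only [map_zsmul, diff_single, smul_sub, Finset.smul_sum, Finset.sum_sub_distrib]
  rw [hfaces, Fin.sum_univ_succ (n := n + 1), htop]
  simp only [ChainIdx.top_del_succ, ChainIdx.head_del_succ, ChainIdx.del_b, Fin.val_succ,
    pow_succ, mul_neg_one, neg_smul, Finset.sum_neg_distrib, Fin.val_zero, pow_zero, one_smul]
  abel

theorem diffNeg_diff_single (hmul : MulOfDominates R e) (β : ChainIdx R 1) (m : A) :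
    diffNeg R e (diff R e 0 (single β m)) = 0 := by
  have hc := β.rk_sub_rk_head_lt
  rw [diff_single, map_sub, map_sum, Fin.sum_univ_one, map_zsmul, diffNeg_single, diffNeg_single,
    Fin.val_zero, pow_zero, one_smul, mul_assoc, hmul.mul_top β β.top.hq1 β.top.hq2,
    ChainIdx.top_q, Nat.add_sub_cancel' hc.le]
  exact sub_self _

theorem diff_diff (hmul : MulOfDominates R e) (x : ChainIdx R (n + 2) →₀ A) :
    diff R e n (diff R e (n + 1) x) = 0 := by
  induction x using Finsupp.induction_linear with
  | zero => simp
  | add x y hx hy => simp [hx, hy]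
  | single β m => exact diff_diff_single hmul β m

theorem diffNeg_diff (hmul : MulOfDominates R e) (x : ChainIdx R 1 →₀ A) :
    diffNeg R e (diff R e 0 x) = 0 := by
  induction x using Finsupp.induction_linear with
  | zero => simp
  | add x y hx hy => simp [hx, hy]
  | single β m => exact diffNeg_diff_single hmul β m

open Classical in
variable (e) in
noncomputable def homotopyBasis (β : ChainIdx R n) (L : List (Γ × ℕ)) :
    ChainIdx R (n + 1) →₀ A :=
  match L.getLast? with
  | Option.some (x, k) =>
    if h : β.b < x ∧ k = R.rk x - R.rk β.b then single (β.push x h.1) (monomial e L.dropLast)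
    else 0
  | none => 0

variable (R e) in
noncomputable def homotopyNegBasis (L : List (Γ × ℕ)) : ChainIdx R 0 →₀ A :=
  match L.getLast? with
  | Option.some (x, k) =>
    -- the condition holds whenever `L` is good; it only makes `[( ); x, k]` well formed
    if h : 1 ≤ k ∧ k ≤ R.rk x then single (ChainIdx.nil x k h.1 h.2) (monomial e L.dropLast)
    else 0
  | none => 0

theorem homotopyBasis_concat (β : ChainIdx R n) (L : List (Γ × ℕ)) {x : Γ} (hx : β.b < x)
    {k : ℕ} (hk : k = R.rk x - R.rk β.b) :
    homotopyBasis e β (L ++ [(x, k)]) = single (β.push x hx) (monomial e L) := by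
  simp [homotopyBasis, hx, hk]

theorem homotopyBasis_eq_zero (β : ChainIdx R n) {L : List (Γ × ℕ)}
    (h : ¬ LastDominates R β.b L) : homotopyBasis e β L = 0 := by
  obtain rfl | ⟨L', ⟨x, k⟩, rfl⟩ := L.eq_nil_or_concat'
  · rfl
  · simp only [homotopyBasis, List.getLast?_concat, List.dropLast_concat]
    exact dif_neg fun ⟨hx, hk⟩ => h ⟨L', x, hx, by rw [hk]⟩

theorem homotopyNegBasis_concat (L : List (Γ × ℕ)) {x : Γ} {k : ℕ} (h1 : 1 ≤ k)
    (h2 : k ≤ R.rk x) :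
    homotopyNegBasis R e (L ++ [(x, k)]) = single (ChainIdx.nil x k h1 h2) (monomial e L) := by
  simp [homotopyNegBasis, h1, h2]

variable {F : Type*} [CommRing F] [Algebra F A]
  (bA : Module.Basis {L : List (Γ × ℕ) // IsGoodList R L} F A)

variable (e) in
noncomputable def homotopy (n : ℕ) : (ChainIdx R n →₀ A) →ₗ[F] (ChainIdx R (n + 1) →₀ A) :=
  lsum F fun β => bA.constr F fun L => homotopyBasis e β L.1

variable (e) in
noncomputable def homotopyNeg : A →ₗ[F] (ChainIdx R 0 →₀ A) :=
  bA.constr F fun L => homotopyNegBasis R e L.1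

variable {bA}

theorem homotopy_single (hbA : ⇑bA = goodMonomial R A e) (β : ChainIdx R n)
    {L : List (Γ × ℕ)} (hL : IsGoodList R L) :
    homotopy e bA n (single β (monomial e L)) = homotopyBasis e β L := by
  have : monomial e L = bA ⟨L, hL⟩ := by rw [hbA]; rfl
  rw [this, homotopy, lsum_single, Module.Basis.constr_basis]

theorem homotopyNeg_monomial (hbA : ⇑bA = goodMonomial R A e) {L : List (Γ × ℕ)}
    (hL : IsGoodList R L) :
    homotopyNeg e bA (monomial e L) = homotopyNegBasis R e L := by
  have : monomial e L = bA ⟨L, hL⟩ := by rw [hbA]; rfl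
  rw [this, homotopyNeg, Module.Basis.constr_basis]

theorem homotopy_diff_add_diff_homotopy_single (hmul : MulOfDominates R e)
    (hbA : ⇑bA = goodMonomial R A e) (β : ChainIdx R (n + 1)) {L : List (Γ × ℕ)}
    (hL : IsGoodList R L) :
    homotopy e bA n (diff R e n (single β (monomial e L))) +
      diff R e (n + 1) (homotopy e bA (n + 1) (single β (monomial e L))) =
        single β (monomial e L) := by
  have hc := β.rk_sub_rk_head_lt
  have hcb := β.rk_head_lt
  rw [diff_single, map_sub, map_sum]
  simp only [map_zsmul, homotopy_single hbA _ hL]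
  by_cases hdom : LastDominates R β.b L
  · obtain ⟨L', x, hx, rfl⟩ := hdom
    have hxb := R.rk_strictMono hx
    have hL' : IsGoodList R (L' ++ [(x, R.rk x - R.rk β.top.b)]) :=
      hL.replaceLast (by simp; omega) (by omega)
    rw [monomial_mul_of_lastDominates hmul L' β.star_lt hx (by omega) (Nat.sub_le _ _),
      show R.rk x - R.rk β.b + (R.rk β.b - R.rk (β.l.head β.l_ne_nil)) = R.rk x - R.rk β.top.b
        by simp; omega,
      homotopy_single hbA _ hL', homotopyBasis_concat β.top L' (β.head_lt.trans hx) rfl,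
      β.top_push_eq_push_del_zero hx, homotopyBasis_concat β L' hx rfl, diff_single,
      ChainIdx.push_top]
    have hdel : ∀ i : Fin (n + 1), homotopyBasis e (β.del i) (L' ++ [(x, R.rk x - R.rk β.b)]) =
        single ((β.push x hx).del i.succ) (monomial e L') := fun i =>
      homotopyBasis_concat (β.del i) L' hx rfl
    simp only [hdel, Fin.sum_univ_succ (n := n + 1), Fin.val_succ, pow_succ, mul_neg_one,
      neg_smul, Finset.sum_neg_distrib, Fin.val_zero, pow_zero, one_smul]
    rw [ChainIdx.push_b, ChainIdx.head_push, ← monomial_concat]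
    abel
  · have hL' : IsGoodList R (L ++ [(β.b, R.rk β.b - R.rk (β.l.head β.l_ne_nil))]) :=
      hL.concat β.star_lt.ne' (by omega) (Nat.sub_le _ _) hdom
    rw [← monomial_concat, homotopy_single hbA _ hL', homotopyBasis_concat β.top L β.head_lt
      (k := R.rk β.b - R.rk (β.l.head β.l_ne_nil)) rfl,
      β.top_push, homotopyBasis_eq_zero β hdom, map_zero, add_zero, sub_eq_self]
    exact Finset.sum_eq_zero fun i _ => by rw [homotopyBasis_eq_zero (β.del i) hdom, smul_zero]

theorem homotopyNeg_diffNeg_add_diff_homotopy_single (hmul : MulOfDominates R e)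
    (hbA : ⇑bA = goodMonomial R A e) (β : ChainIdx R 0) {L : List (Γ × ℕ)}
    (hL : IsGoodList R L) :
    homotopyNeg e bA (diffNeg R e (single β (monomial e L))) +
      diff R e 0 (homotopy e bA 0 (single β (monomial e L))) = single β (monomial e L) := by
  have hq1 := β.hq1
  have hq2 := β.hq2
  rw [diffNeg_single, homotopy_single hbA _ hL]
  by_cases hdom : LastDominates R β.b L
  · obtain ⟨L', x, hx, rfl⟩ := hdom
    have hxb := R.rk_strictMono hx
    rw [monomial_mul_of_lastDominates hmul L' β.star_lt hx hq1 hq2,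
      homotopyNeg_monomial hbA (hL.replaceLast (by omega) (by omega)),
      homotopyNegBasis_concat L' (by omega) (by omega), β.nil_eq_push_del_zero hx _ _ rfl,
      homotopyBasis_concat β L' hx rfl, diff_single, ChainIdx.push_top, ChainIdx.push_b,
      ChainIdx.head_push, ← monomial_concat, Fin.sum_univ_one, Fin.val_zero, pow_zero, one_smul]
    abel
  · rw [← monomial_concat, homotopyNeg_monomial hbA (hL.concat β.star_lt.ne' hq1 hq2 hdom),
      homotopyNegBasis_concat L hq1 hq2, ← β.eq_nil, homotopyBasis_eq_zero β hdom, map_zero,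
      add_zero]

theorem algebraMap_add_diffNeg_homotopyNeg_monomial (hbA : ⇑bA = goodMonomial R A e)
    (ε : A →ₗ[F] F) (hε : ∀ L : {L : List (Γ × ℕ) // IsGoodList R L},
      ε (goodMonomial R A e L) = if L.1 = [] then 1 else 0)
    {L : List (Γ × ℕ)} (hL : IsGoodList R L) :
    algebraMap F A (ε (monomial e L)) + diffNeg R e (homotopyNeg e bA (monomial e L)) =
      monomial e L := by
  rw [show ε (monomial e L) = if L = [] then 1 else 0 from hε ⟨L, hL⟩,
    homotopyNeg_monomial hbA hL]
  obtain rfl | ⟨L', ⟨x, k⟩, rfl⟩ := L.eq_nil_or_concat'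
  · simp [homotopyNegBasis]
  · obtain ⟨h1, h2⟩ := hL.bounds_of_concat
    simp [homotopyNegBasis_concat L' h1 h2, diffNeg_single, ChainIdx.nil]

theorem augmentation_diffNeg_single (hmul : MulOfDominates R e)
    (ε : A →ₗ[F] F) (hε : ∀ L : {L : List (Γ × ℕ) // IsGoodList R L},
      ε (goodMonomial R A e L) = if L.1 = [] then 1 else 0)
    (β : ChainIdx R 0) {L : List (Γ × ℕ)} (hL : IsGoodList R L) :
    ε (diffNeg R e (single β (monomial e L))) = 0 := by
  have hq1 := β.hq1
  have hq2 := β.hq2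
  rw [diffNeg_single]
  by_cases hdom : LastDominates R β.b L
  · obtain ⟨L', x, hx, rfl⟩ := hdom
    have hxb := R.rk_strictMono hx
    rw [monomial_mul_of_lastDominates hmul L' β.star_lt hx hq1 hq2]
    exact (hε ⟨_, hL.replaceLast (k' := R.rk x - R.rk β.b + β.q) (by omega) (by omega)⟩).trans
      (if_neg (by simp))
  · rw [← monomial_concat]
    exact (hε ⟨_, hL.concat β.star_lt.ne' hq1 hq2 hdom⟩).trans (if_neg (by simp))

theorem lhom_ext_single_monomial {ι M : Type*} [AddCommMonoid M] [Module F M]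
    (hbA : ⇑bA = goodMonomial R A e) {f g : (ι →₀ A) →ₗ[F] M}
    (h : ∀ i L, IsGoodList R L → f (single i (monomial e L)) = g (single i (monomial e L))) :
    f = g :=
  lhom_ext' fun i => bA.ext fun L => by
    simp only [LinearMap.comp_apply, lsingle_apply, hbA]
    exact h i L.1 L.2

theorem homotopy_diff_add_diff_homotopy (hmul : MulOfDominates R e)
    (hbA : ⇑bA = goodMonomial R A e) (x : ChainIdx R (n + 1) →₀ A) :
    homotopy e bA n (diff R e n x) + diff R e (n + 1) (homotopy e bA (n + 1) x) = x := by
  have h : (homotopy e bA n).comp ((diff R e n).restrictScalars F) +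
      ((diff R e (n + 1)).restrictScalars F).comp (homotopy e bA (n + 1)) = LinearMap.id :=
    lhom_ext_single_monomial hbA fun β _ hL => by
      simpa using homotopy_diff_add_diff_homotopy_single hmul hbA β hL
  simpa using LinearMap.congr_fun h x

theorem homotopyNeg_diffNeg_add_diff_homotopy (hmul : MulOfDominates R e)
    (hbA : ⇑bA = goodMonomial R A e) (x : ChainIdx R 0 →₀ A) :
    homotopyNeg e bA (diffNeg R e x) + diff R e 0 (homotopy e bA 0 x) = x := by
  have h : (homotopyNeg e bA).comp ((diffNeg R e).restrictScalars F) +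
      ((diff R e 0).restrictScalars F).comp (homotopy e bA 0) = LinearMap.id :=
    lhom_ext_single_monomial hbA fun β _ hL => by
      simpa using homotopyNeg_diffNeg_add_diff_homotopy_single hmul hbA β hL
  simpa using LinearMap.congr_fun h x

theorem algebraMap_add_diffNeg_homotopyNeg (hbA : ⇑bA = goodMonomial R A e)
    (ε : A →ₗ[F] F) (hε : ∀ L : {L : List (Γ × ℕ) // IsGoodList R L},
      ε (goodMonomial R A e L) = if L.1 = [] then 1 else 0) (a : A) :
    algebraMap F A (ε a) + diffNeg R e (homotopyNeg e bA a) = a := by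
  have h : (Algebra.linearMap F A).comp ε +
      ((diffNeg R e).restrictScalars F).comp (homotopyNeg e bA) = LinearMap.id :=
    bA.ext fun L => by
      simp only [LinearMap.add_apply, LinearMap.comp_apply, Algebra.linearMap_apply,
        LinearMap.restrictScalars_apply, LinearMap.id_apply, hbA]
      exact algebraMap_add_diffNeg_homotopyNeg_monomial hbA ε hε L.2
  simpa using LinearMap.congr_fun h a

theorem augmentation_diffNeg (hmul : MulOfDominates R e) (hbA : ⇑bA = goodMonomial R A e)
    (ε : A →ₗ[F] F) (hε : ∀ L : {L : List (Γ × ℕ) // IsGoodList R L},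
      ε (goodMonomial R A e L) = if L.1 = [] then 1 else 0) (x : ChainIdx R 0 →₀ A) :
    ε (diffNeg R e x) = 0 := by
  have h : ε.comp ((diffNeg R e).restrictScalars F) = 0 :=
    lhom_ext_single_monomial hbA fun β _ hL => by
      simpa using augmentation_diffNeg_single hmul ε hε β hL
  simpa using LinearMap.congr_fun h x

end GoodResolution

theorem goodMonomialAlgebra_resolution_exact_general
    {Γ : Type} [PartialOrder Γ] (R : RankedPoset Γ)
    (F : Type) [Field F] (A : Type) [Ring A] [Algebra F A]
    (e : Γ → ℕ → A)
    -- (i) the good monomials form an `F`-basis of `A`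
    (hli : LinearIndependent F (goodMonomial R A e))
    (hspan : Submodule.span F (Set.range (goodMonomial R A e)) = ⊤)
    -- (ii) `e(x,j)·e(y,k) = e(x,j+k)` whenever `(x,j) ⊵ (y,k)`
    (hmul : ∀ x y : Γ, ∀ j k : ℕ, y ≠ R.star → y < x → j = R.rk x - R.rk y →
      1 ≤ k → k ≤ R.rk y → e x j * e y k = e x (j + k))
    -- the augmentation `ε : A → F`
    (ε : A →ₗ[F] F)
    (hε : ∀ l : {l : List (Γ × ℕ) // IsGoodList R l},
      ε (goodMonomial R A e l) = if l.1 = [] then 1 else 0) :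
    -- exactness at `F`
    Function.Surjective ε ∧
    -- exactness at `A`
    (∀ a : A, ε a = 0 ↔ ∃ x, dNeg R A e x = a) ∧
    -- exactness at `A ⊗ Ĉ₋₁`
    (∀ x : ChainIdx R 0 →₀ A, dNeg R A e x = 0 ↔
      ∃ y, dMap R A (fun b a => e b (R.rk b - R.rk a)) 0 y = x) ∧
    -- exactness at `A ⊗ Ĉ_n` for all `n ≥ 0`
    (∀ (n : ℕ) (x : ChainIdx R (n + 1) →₀ A),
      dMap R A (fun b a => e b (R.rk b - R.rk a)) n x = 0 ↔
        ∃ y, dMap R A (fun b a => e b (R.rk b - R.rk a)) (n + 1) y = x) := by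
  simp only [GoodResolution.dMap_eq_diff, GoodResolution.dNeg_eq_diffNeg]
  let bA := Module.Basis.mk hli hspan.ge
  have hbA : ⇑bA = goodMonomial R A e := Module.Basis.coe_mk _ _
  have hε1 : ε 1 = 1 := (hε ⟨[], by simp, List.isChain_nil⟩).trans (if_pos rfl)
  refine ⟨fun c => ⟨c • 1, by rw [map_smul, hε1, smul_eq_mul, mul_one]⟩, ?_, ?_, fun n => ?_⟩
  · exact Function.Exact.of_homotopy (GoodResolution.homotopyNeg e bA) (algebraMap F A)
      (map_zero _) (GoodResolution.augmentation_diffNeg hmul hbA ε hε)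
      (GoodResolution.algebraMap_add_diffNeg_homotopyNeg hbA ε hε)
  · exact Function.Exact.of_homotopy (GoodResolution.homotopy e bA 0)
      (GoodResolution.homotopyNeg e bA) (map_zero _) (GoodResolution.diffNeg_diff hmul)
      (GoodResolution.homotopyNeg_diffNeg_add_diff_homotopy hmul hbA)
  · exact Function.Exact.of_homotopy (GoodResolution.homotopy e bA (n + 1))
      (GoodResolution.homotopy e bA n) (map_zero _) (GoodResolution.diff_diff hmul)
      (GoodResolution.homotopy_diff_add_diff_homotopy hmul hbA)

/-- Let `A` be a good-monomial algebra for `Γ` over `F` (for instance the associated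
graded algebra `A'_Γ` of the splitting algebra), with augmentation `ε`.  With
`f(b,a) = e(b, d(b,a))`, the sequence
`⋯ → A ⊗ Ĉ₁ → A ⊗ Ĉ₀ → A ⊗ Ĉ₋₁ → A → F → 0` is exact; in particular
`A ⊗ Ĉ_• → A` is a free resolution of the left `A`-module `F = A/A₊`. -/
theorem goodMonomialAlgebra_resolution_exact
    {Γ : Type} [PartialOrder Γ] [DecidableEq Γ] [Fintype Γ] (R : RankedPoset Γ)
    (F : Type) [Field F] (A : Type) [Ring A] [Algebra F A]
    (e : Γ → ℕ → A)
    -- (i) the good monomials form an `F`-basis of `A`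
    (hli : LinearIndependent F (goodMonomial R A e))
    (hspan : Submodule.span F (Set.range (goodMonomial R A e)) = ⊤)
    -- (ii) `e(x,j)·e(y,k) = e(x,j+k)` whenever `(x,j) ⊵ (y,k)`
    (hmul : ∀ x y : Γ, ∀ j k : ℕ, y ≠ R.star → y < x → j = R.rk x - R.rk y →
      1 ≤ k → k ≤ R.rk y → e x j * e y k = e x (j + k))
    -- the augmentation `ε : A → F`
    (ε : A →ₗ[F] F)
    (hε : ∀ l : {l : List (Γ × ℕ) // IsGoodList R l},
      ε (goodMonomial R A e l) = if l.1 = [] then 1 else 0) :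
    -- exactness at `F`
    Function.Surjective ε ∧
    -- exactness at `A`
    (∀ a : A, ε a = 0 ↔ ∃ x, dNeg R A e x = a) ∧
    -- exactness at `A ⊗ Ĉ₋₁`
    (∀ x : ChainIdx R 0 →₀ A, dNeg R A e x = 0 ↔
      ∃ y, dMap R A (fun b a => e b (R.rk b - R.rk a)) 0 y = x) ∧
    -- exactness at `A ⊗ Ĉ_n` for all `n ≥ 0`
    (∀ (n : ℕ) (x : ChainIdx R (n + 1) →₀ A),
      dMap R A (fun b a => e b (R.rk b - R.rk a)) n x = 0 ↔
        ∃ y, dMap R A (fun b a => e b (R.rk b - R.rk a)) (n + 1) y = x) :=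
  goodMonomialAlgebra_resolution_exact_general R F A e hli hspan hmul ε hε
end

section
/- Γ is uniform if and only if, for every b ∈ Γ with rk(b) ≥ 3, the comparability graph of Γ_{b,3} (vertex set Γ_{b,3}, with an edge between distinct a, a′ whenever a < a′ or a′ < a) is connected. -/
/-- Membership in `Γ_{b,q} = {a | * < a < b and d(b,a) ≤ q - 1}`. -/
def memGbq {Γ : Type} [PartialOrder Γ] (R : RankedPoset Γ) (b : Γ) (q : ℕ) (a : Γ) : Prop :=
  R.star < a ∧ a < b ∧ R.rk b - R.rk a ≤ q - 1

/-- The comparability graph of a subset `S` of the poset `Γ`: vertices are the elements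
of `S`, with an edge between distinct `a, a'` whenever `a < a'` or `a' < a`. -/
def compGraph {Γ : Type} [PartialOrder Γ] (S : Γ → Prop) : SimpleGraph {a : Γ // S a} where
  Adj u v := u ≠ v ∧ (u.1 < v.1 ∨ v.1 < u.1)
  symm := ⟨fun u v h => ⟨h.1.symm, h.2.symm⟩⟩
  loopless := ⟨fun u h => h.1 rfl⟩

/-- `a ∈ S_x(1)`: `a < x` and `d(x,a) = 1`. -/
def memS1 {Γ : Type} [PartialOrder Γ] (R : RankedPoset Γ) (x a : Γ) : Prop :=
  a < x ∧ R.rk x - R.rk a = 1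

/-- `Γ` is uniform if for every `x ∈ Γ₊` the equivalence relation on `S_x(1)` generated
by `a ∼_x b ↔ ∃ c ∈ S_a(1) ∩ S_b(1)` has exactly one equivalence class. -/
def RankedPoset.Uniform {Γ : Type} [PartialOrder Γ] (R : RankedPoset Γ) : Prop :=
  ∀ x : Γ, x ≠ R.star →
    (∃ a, memS1 R x a) ∧
      ∀ a b : Γ, memS1 R x a → memS1 R x b →
        Relation.EqvGen
          (fun u v => memS1 R x u ∧ memS1 R x v ∧ ∃ c, memS1 R u c ∧ memS1 R v c) a b

/-- The relation `a ∼_x b` of the paper, restricted to `a, b ∈ S_x(1)`. -/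
def CovSim {α : Type*} [Preorder α] (x u v : α) : Prop :=
  u ⋖ x ∧ v ⋖ x ∧ ∃ c, c ⋖ u ∧ c ⋖ v

instance {α : Type*} [Preorder α] (x : α) : Std.Symm (CovSim x) :=
  ⟨fun _ _ ⟨hu, hv, c, hcu, hcv⟩ => ⟨hv, hu, c, hcv, hcu⟩⟩

theorem compGraph_adj_of_lt {Γ : Type} [PartialOrder Γ] {S : Γ → Prop} {u v : Subtype S}
    (h : u.1 < v.1) : (compGraph S).Adj u v :=
  ⟨fun e => h.ne (congrArg Subtype.val e), Or.inl h⟩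

namespace RankedPoset

variable {Γ : Type} [PartialOrder Γ] (R : RankedPoset Γ) {a a' b c u x : Γ}

theorem covBy_iff_rk : a ⋖ b ↔ a < b ∧ R.rk b = R.rk a + 1 := by
  refine ⟨fun h => ⟨h.lt, R.rk_covBy h⟩, fun ⟨hab, hrk⟩ => ⟨hab, fun c hac hcb => ?_⟩⟩
  have := R.rk_strictMono hac
  have := R.rk_strictMono hcb
  omega

theorem memS1_iff_covBy : memS1 R b a ↔ a ⋖ b := by
  rw [memS1, R.covBy_iff_rk]
  constructor <;> rintro ⟨hab, hrk⟩ <;> have := R.rk_strictMono hab <;> exact ⟨hab, by omega⟩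

theorem star_lt_iff : R.star < a ↔ 0 < R.rk a := by
  refine ⟨fun h => R.rk_star ▸ R.rk_strictMono h, fun h => (R.bot_le a).lt_of_ne ?_⟩
  rintro rfl
  simp [R.rk_star] at h

theorem rk_eq_zero_iff : R.rk a = 0 ↔ a = R.star := by
  refine ⟨fun h => by_contra fun hne => ?_, fun h => h ▸ R.rk_star⟩
  have := R.star_lt_iff.1 ((R.bot_le a).lt_of_ne' hne)
  omega

theorem star_covBy_iff : R.star ⋖ a ↔ R.rk a = 1 := by
  rw [R.covBy_iff_rk, R.star_lt_iff, R.rk_star]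
  omega

theorem uniform_iff : R.Uniform ↔ ∀ x, x ≠ R.star →
    (∃ a, a ⋖ x) ∧ ∀ a a', a ⋖ x → a' ⋖ x → Relation.EqvGen (CovSim x) a a' := by
  simp only [Uniform, memS1_iff_covBy]
  rfl

theorem exists_covBy [IsStronglyCoatomic Γ] (hx : x ≠ R.star) : ∃ a, a ⋖ x :=
  (exists_le_covBy_of_lt ((R.bot_le x).lt_of_ne' hx)).imp fun _ h => h.2

theorem eqvGen_covSim_of_rk_le_two (hx : R.rk x ≤ 2) (ha : a ⋖ x) (ha' : a' ⋖ x) :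
    Relation.EqvGen (CovSim x) a a' := by
  have hra := R.rk_covBy ha
  have hra' := R.rk_covBy ha'
  by_cases h0 : R.rk a = 0
  · rw [R.rk_eq_zero_iff.1 h0, (R.rk_eq_zero_iff (a := a')).1 (by omega)]
    exact .refl _
  · exact .rel _ _ ⟨ha, ha', R.star, R.star_covBy_iff.2 (by omega), R.star_covBy_iff.2 (by omega)⟩

theorem memGbq_of_covBy (hb : 2 ≤ R.rk b) (h : a ⋖ b) : memGbq R b 3 a := by
  have := R.rk_covBy h
  exact ⟨R.star_lt_iff.2 (by omega), h.lt, by omega⟩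

theorem memGbq_of_covBy_covBy (hb : 3 ≤ R.rk b) (hca : c ⋖ a) (hab : a ⋖ b) :
    memGbq R b 3 c := by
  have := R.rk_covBy hca
  have := R.rk_covBy hab
  exact ⟨R.star_lt_iff.2 (by omega), hca.lt.trans hab.lt, by omega⟩

theorem eq_or_covBy_of_memGbq_of_le (hu : memGbq R b 3 u) (hua : u ≤ a) (hab : a ⋖ b) :
    u = a ∨ u ⋖ a := by
  refine hua.eq_or_lt.imp_right fun hlt => (R.covBy_iff_rk).2 ⟨hlt, ?_⟩
  have := R.rk_strictMono hlt
  have := R.rk_covBy hab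
  have := hu.2.2
  omega

theorem compGraph_reachable_of_eqvGen_covSim (hb : 3 ≤ R.rk b)
    (h : Relation.EqvGen (CovSim b) a a') (ha : memGbq R b 3 a) (ha' : memGbq R b 3 a') :
    (compGraph (memGbq R b 3)).Reachable ⟨a, ha⟩ ⟨a', ha'⟩ := by
  rw [Relation.EqvGen.eqvGen_eq_reflTransGen] at h
  induction h with
  | refl => rfl
  | tail _ hcd ih =>
    obtain ⟨hc, -, e, hec, hed⟩ := hcd
    have he : memGbq R b 3 e := R.memGbq_of_covBy_covBy hb hec hc
    exact (ih (R.memGbq_of_covBy (by omega) hc)).trans <|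
      (compGraph_adj_of_lt (u := ⟨e, he⟩) hec.lt).reachable.symm.trans
        (compGraph_adj_of_lt hed.lt).reachable

theorem exists_covBy_compGraph_reachable [IsStronglyCoatomic Γ] (hb : 3 ≤ R.rk b)
    (u : {u // memGbq R b 3 u}) :
    ∃ a, ∃ ha : a ⋖ b,
      (compGraph (memGbq R b 3)).Reachable u ⟨a, R.memGbq_of_covBy (by omega) ha⟩ := by
  obtain ⟨u, hu⟩ := u
  obtain ⟨a, hua, hab⟩ := exists_le_covBy_of_lt hu.2.1
  refine ⟨a, hab, ?_⟩
  rcases hua.eq_or_lt with rfl | hlt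
  · rfl
  · exact (compGraph_adj_of_lt hlt).reachable

theorem eqvGen_covSim_of_le_of_le (hu : memGbq R b 3 u) (hua : u ≤ a) (hua' : u ≤ a')
    (ha : a ⋖ b) (ha' : a' ⋖ b) : Relation.EqvGen (CovSim b) a a' := by
  rcases R.eq_or_covBy_of_memGbq_of_le hu hua ha with rfl | hua <;>
    rcases R.eq_or_covBy_of_memGbq_of_le hu hua' ha' with rfl | hua'
  · exact .refl _
  · exact (ha.2 hua'.lt ha'.lt).elim
  · exact (ha'.2 hua.lt ha.lt).elim
  · exact .rel _ _ ⟨ha, ha', u, hua, hua'⟩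

theorem eqvGen_covSim_of_compGraph_reachable [IsStronglyCoatomic Γ]
    {u v : {u // memGbq R b 3 u}} (h : (compGraph (memGbq R b 3)).Reachable u v)
    (hua : u.1 ≤ a) (ha : a ⋖ b) (hva' : v.1 ≤ a') (ha' : a' ⋖ b) :
    Relation.EqvGen (CovSim b) a a' := by
  rw [SimpleGraph.reachable_iff_reflTransGen] at h
  induction h generalizing a' with
  | refl => exact R.eqvGen_covSim_of_le_of_le u.2 hua hva' ha ha'
  | @tail v w _ hvw ih =>
    -- the lower endpoint of the edge `v w` lies below both `t` and `a'`
    obtain ⟨t, hvt, ht⟩ := exists_le_covBy_of_lt v.2.2.1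
    refine .trans _ _ _ (ih hvt ht) ?_
    rcases hvw.2 with hlt | hlt
    · exact R.eqvGen_covSim_of_le_of_le v.2 hvt (hlt.le.trans hva') ht ha'
    · exact R.eqvGen_covSim_of_le_of_le w.2 (hlt.le.trans hvt) hva' ht ha'

theorem compGraph_connected_iff [IsStronglyCoatomic Γ] (hb : 3 ≤ R.rk b) :
    (compGraph (memGbq R b 3)).Connected ↔
      ∀ a a', a ⋖ b → a' ⋖ b → Relation.EqvGen (CovSim b) a a' := by
  have hb₂ : 2 ≤ R.rk b := by omega
  refine ⟨fun h a a' ha ha' => ?_, fun h => ?_⟩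
  · exact R.eqvGen_covSim_of_compGraph_reachable
      (h.preconnected ⟨a, R.memGbq_of_covBy hb₂ ha⟩ ⟨a', R.memGbq_of_covBy hb₂ ha'⟩)
      le_rfl ha le_rfl ha'
  · obtain ⟨a₀, ha₀⟩ := R.exists_covBy ((R.star_lt_iff (a := b)).2 (by omega)).ne'
    refine (SimpleGraph.connected_iff_exists_forall_reachable _).2
      ⟨⟨a₀, R.memGbq_of_covBy hb₂ ha₀⟩, fun u => ?_⟩
    obtain ⟨a, ha, hu⟩ := R.exists_covBy_compGraph_reachable hb u
    exact (R.compGraph_reachable_of_eqvGen_covSim hb (h a₀ a ha₀ ha) _ _).trans hu.symm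

end RankedPoset

/-- `Γ` is uniform if and only if, for every `b ∈ Γ` with `rk b ≥ 3`, the comparability
graph of `Γ_{b,3}` is connected. -/
theorem uniform_iff_compGraph_connected
    {Γ : Type} [PartialOrder Γ] [Fintype Γ] (R : RankedPoset Γ) :
    R.Uniform ↔ ∀ b : Γ, 3 ≤ R.rk b → (compGraph (memGbq R b 3)).Connected := by
  rw [R.uniform_iff]
  refine ⟨fun h b hb => (R.compGraph_connected_iff hb).2 (h b ?_).2,
    fun h x hx => ⟨R.exists_covBy hx, fun a a' ha ha' => ?_⟩⟩
  · exact ((R.star_lt_iff (a := b)).2 (by omega)).ne'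
  · by_cases hx₃ : 3 ≤ R.rk x
    · exact (R.compGraph_connected_iff hx₃).1 (h x hx₃) a a' ha ha'
    · exact R.eqvGen_covSim_of_rk_le_two (by omega) ha ha'
end
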